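/- arXiv:1804.02577 — 6 statements merged into one kernel-verified Lean document; each statement's English description precedes it below -/
import Mathlib

section
/- For every (ξ,μ) ∈ 𝒫 = (1.18,1.19) × (−10,−9), the images G_{ξ,μ}(𝒜_{ξ,μ}) and G_{ξ,μ}(ℬ_{ξ,μ}) are disjoint, and G_{ξ,μ}(Δ \ (𝒜_{ξ,μ} ∪ ℬ_{ξ,μ})) ∩ Δ = ∅. -/
/-! Only the middle coordinate `y` of a point matters. It becomes the first coordinate of the
image, so the images of `𝒜` and `ℬ` are separated by the gap `(b_μ, c_μ)`, which is nonempty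
because `μ < -4`. The second coordinate of the image is `μ + y²`, and it lies in `[-4, 4]`
exactly when `√(-4 - μ) ≤ |y| ≤ √(4 - μ)`, that is, when `y ∈ I_μ ∪ J_μ`. -/

open Set

noncomputable def G (ξ μ : ℝ) : ℝ × ℝ × ℝ → ℝ × ℝ × ℝ :=
  fun p => (p.2.1, μ + p.2.1 ^ 2, ξ * p.2.2 + p.2.1)

def Cube : Set (ℝ × ℝ × ℝ) := Icc (-4) 4 ×ˢ Icc (-4) 4 ×ˢ Icc (-40) 22

noncomputable def am (μ : ℝ) : ℝ := -Real.sqrt (4 - μ)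
noncomputable def bm (μ : ℝ) : ℝ := -Real.sqrt (-4 - μ)
noncomputable def cm (μ : ℝ) : ℝ := Real.sqrt (-4 - μ)
noncomputable def dm (μ : ℝ) : ℝ := Real.sqrt (4 - μ)

/-- The sub-cube `𝒜 = [−4,4] × I_μ × [−40,22]`. -/
noncomputable def legA (μ : ℝ) : Set (ℝ × ℝ × ℝ) :=
  Icc (-4) 4 ×ˢ Icc (am μ) (bm μ) ×ˢ Icc (-40) 22

/-- The sub-cube `ℬ = [−4,4] × J_μ × [−40,22]`. -/
noncomputable def legB (μ : ℝ) : Set (ℝ × ℝ × ℝ) :=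
  Icc (-4) 4 ×ˢ Icc (cm μ) (dm μ) ×ˢ Icc (-40) 22

variable {ξ μ : ℝ}

lemma Real.mem_Icc_neg_sqrt_union_Icc_sqrt_of_sq_mem_Icc {a b y : ℝ} (h : y ^ 2 ∈ Icc a b) :
    y ∈ Icc (-√b) (-√a) ∪ Icc (√a) (√b) := by
  have hlo : √a ≤ |y| := Real.sqrt_sq_eq_abs y ▸ Real.sqrt_le_sqrt h.1
  have hhi : |y| ≤ √b := Real.sqrt_sq_eq_abs y ▸ Real.sqrt_le_sqrt h.2
  rcases abs_cases y with ⟨hy, -⟩ | ⟨hy, -⟩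
  · exact Or.inr ⟨hy ▸ hlo, hy ▸ hhi⟩
  · exact Or.inl ⟨by linarith, by linarith⟩

lemma bm_lt_cm (hμ : μ < -4) : bm μ < cm μ :=
  neg_lt_self (Real.sqrt_pos.mpr (by linarith))

lemma image_legA_subset : G ξ μ '' legA μ ⊆ Prod.fst ⁻¹' Icc (am μ) (bm μ) := by
  rintro _ ⟨p, hp, rfl⟩
  exact hp.2.1

lemma image_legB_subset : G ξ μ '' legB μ ⊆ Prod.fst ⁻¹' Icc (cm μ) (dm μ) := by
  rintro _ ⟨p, hp, rfl⟩
  exact hp.2.1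

lemma sq_mem_Icc_of_G_mem_Cube {p : ℝ × ℝ × ℝ} (h : G ξ μ p ∈ Cube) :
    p.2.1 ^ 2 ∈ Icc (-4 - μ) (4 - μ) := by
  have h' : μ + p.2.1 ^ 2 ∈ Icc (-4) 4 := h.2.1
  constructor <;> linarith [h'.1, h'.2]

lemma mem_legA_union_legB {p : ℝ × ℝ × ℝ} (hp : p ∈ Cube)
    (hy : p.2.1 ∈ Icc (am μ) (bm μ) ∪ Icc (cm μ) (dm μ)) : p ∈ legA μ ∪ legB μ :=
  hy.imp (fun h ↦ ⟨hp.1, h, hp.2.2⟩) (fun h ↦ ⟨hp.1, h, hp.2.2⟩)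

theorem disjoint_images_and_escaping_general (ξ μ : ℝ)
    (hμ : μ ∈ Ioo (-10 : ℝ) (-9)) :
    G ξ μ '' legA μ ∩ G ξ μ '' legB μ = ∅ ∧
    G ξ μ '' (Cube \ (legA μ ∪ legB μ)) ∩ Cube = ∅ := by
  have hIJ : Disjoint (Icc (am μ) (bm μ)) (Icc (cm μ) (dm μ)) :=
    disjoint_left.mpr fun _ hI hJ ↦ (bm_lt_cm (by linarith [hμ.2])).not_ge (hJ.1.trans hI.2)
  refine ⟨disjoint_iff_inter_eq_empty.mp
    ((hIJ.preimage _).mono image_legA_subset image_legB_subset), eq_empty_of_forall_notMem ?_⟩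
  rintro _ ⟨⟨p, ⟨hpCube, hpAB⟩, rfl⟩, hGp⟩
  exact hpAB (mem_legA_union_legB hpCube
    (Real.mem_Icc_neg_sqrt_union_Icc_sqrt_of_sq_mem_Icc (sq_mem_Icc_of_G_mem_Cube hGp)))

theorem disjoint_images_and_escaping (ξ μ : ℝ)
    (hξ : ξ ∈ Ioo (1.18 : ℝ) 1.19) (hμ : μ ∈ Ioo (-10 : ℝ) (-9)) :
    G ξ μ '' legA μ ∩ G ξ μ '' legB μ = ∅ ∧
    G ξ μ '' (Cube \ (legA μ ∪ legB μ)) ∩ Cube = ∅ :=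
  disjoint_images_and_escaping_general ξ μ hμ
end

section
/- Invariance of the unstable cone field of angle 1/2: let ξ ∈ (1.18,1.19) and y ∈ ℝ with |y| > √5. If a vector (u,v,w) ∈ ℝ³ satisfies |u| < (1/2)·√(v² + w²), then its image (u₁,v₁,w₁) = (v, 2y·v, v + ξ·w) under the derivative of G_{ξ,μ} satisfies |u₁| < (1/2)·√(v₁² + w₁²). -/
/-! The cone condition forces `(v, w) ≠ 0`. If `v ≠ 0`, the expansion `|2y| > 2` of the second
coordinate alone already beats `2|v|`; if `v = 0`, the first coordinate of the image vanishes while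
the third, `ξ w`, does not. -/

open Set

lemma pos_of_abs_lt_mul_sqrt {u c s : ℝ} (h : |u| < c * √s) : 0 < s := by
  have hpos : 0 < c * √s := (abs_nonneg u).trans_lt h
  by_contra! hs
  rw [Real.sqrt_eq_zero_of_nonpos hs, mul_zero] at hpos
  exact hpos.false

lemma two_mul_sq_lt_of_one_lt_sq {ξ y v w : ℝ} (hξ : ξ ≠ 0) (hy : 1 < y ^ 2)
    (hvw : 0 < v ^ 2 + w ^ 2) : (2 * v) ^ 2 < (2 * y * v) ^ 2 + (v + ξ * w) ^ 2 := by
  rcases eq_or_ne v 0 with rfl | hv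
  · have hw : w ≠ 0 := by rintro rfl; simp at hvw
    simpa using pow_pos (abs_pos.2 (mul_ne_zero hξ hw)) 2 |>.trans_eq (sq_abs _)
  · have hexpand : (2 * v) ^ 2 < (2 * y * v) ^ 2 := by nlinarith [sq_pos_of_ne_zero hv]
    nlinarith [sq_nonneg (v + ξ * w)]

theorem unstable_cone_invariance (ξ y : ℝ)
    (hξ : ξ ∈ Ioo (1.18 : ℝ) 1.19) (hy : Real.sqrt 5 < |y|)
    (u v w : ℝ) (h : |u| < (1 / 2) * Real.sqrt (v ^ 2 + w ^ 2)) :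
    |v| < (1 / 2) * Real.sqrt ((2 * y * v) ^ 2 + (v + ξ * w) ^ 2) := by
  have hξ0 : ξ ≠ 0 := (lt_trans (by norm_num) hξ.1).ne'
  have hy1 : 1 < y ^ 2 :=
    (one_lt_sq_iff_one_lt_abs y).2 <| lt_trans (Real.lt_sqrt zero_le_one |>.2 (by norm_num)) hy
  have key := two_mul_sq_lt_of_one_lt_sq hξ0 hy1 (pos_of_abs_lt_mul_sqrt h)
  rw [← sq_abs, ← Real.lt_sqrt (abs_nonneg _), abs_mul, abs_two] at key
  linarith
end

section
/- Invariance of the strong unstable cone field of angle 1/2: let ξ ∈ (1.18,1.19) and y ∈ ℝ with |y| > √5. If a vector (u,v,w) ∈ ℝ³ satisfies √(u² + w²) < (1/2)·|v|, then its image (u₁,v₁,w₁) = (v, 2y·v, v + ξ·w) under the derivative of G_{ξ,μ} satisfies √(u₁² + w₁²) < (1/2)·|v₁|. -/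
/-!
The second and third components of the image vector are controlled by `v` alone: inside the cone
`|w| < |v| / 2`, so `|v + ξ w| ≤ (1 + 1.19 / 2) |v|` and `v² + (v + ξ w)² ≤ 3.545 v²`, while the
expansion `|v₁| = 2 |y| |v|` with `y² > 5` gives `(|v₁| / 2)² > 5 v²`.
-/

open Set

lemma abs_add_mul_le_of_abs_le {v w ξ k θ : ℝ} (hk : 0 ≤ k) (hξ : |ξ| ≤ k)
    (hw : |w| ≤ θ * |v|) : |v + ξ * w| ≤ (1 + k * θ) * |v| :=
  calc |v + ξ * w| ≤ |v| + |ξ| * |w| := (abs_add_le _ _).trans_eq (by rw [abs_mul])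
    _ ≤ |v| + k * (θ * |v|) := by gcongr
    _ = (1 + k * θ) * |v| := by ring

lemma sqrt_sq_add_sq_lt_of_cone {v w ξ y k θ : ℝ} (hθ : 0 < θ) (hk : 0 ≤ k) (hξ : |ξ| ≤ k)
    (hw : |w| ≤ θ * |v|) (hv : v ≠ 0) (hy : 1 + (1 + k * θ) ^ 2 < (2 * θ * y) ^ 2) :
    Real.sqrt (v ^ 2 + (v + ξ * w) ^ 2) < θ * |2 * y * v| := by
  have hvy : 0 < θ * |2 * y * v| := by
    have : y ≠ 0 := by rintro rfl; nlinarith [sq_nonneg (1 + k * θ)]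
    positivity
  have hsq : (v + ξ * w) ^ 2 ≤ ((1 + k * θ) * |v|) ^ 2 := by
    rw [← sq_abs]
    exact pow_le_pow_left₀ (abs_nonneg _) (abs_add_mul_le_of_abs_le hk hξ hw) 2
  rw [Real.sqrt_lt' hvy]
  have hv2 : 0 < v ^ 2 := by positivity
  calc v ^ 2 + (v + ξ * w) ^ 2 ≤ (1 + (1 + k * θ) ^ 2) * v ^ 2 := by
        rw [mul_pow, sq_abs] at hsq; linarith
    _ < (2 * θ * y) ^ 2 * v ^ 2 := by gcongr
    _ = (θ * |2 * y * v|) ^ 2 := by rw [mul_pow θ, sq_abs]; ring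

theorem strong_unstable_cone_invariance (ξ y : ℝ)
    (hξ : ξ ∈ Ioo (1.18 : ℝ) 1.19) (hy : Real.sqrt 5 < |y|)
    (u v w : ℝ) (h : Real.sqrt (u ^ 2 + w ^ 2) < (1 / 2) * |v|) :
    Real.sqrt (v ^ 2 + (v + ξ * w) ^ 2) < (1 / 2) * |2 * y * v| := by
  obtain ⟨hξ₀, hξ₁⟩ := hξ
  have hv : v ≠ 0 := by
    rintro rfl
    simp only [abs_zero, mul_zero] at h
    exact (Real.sqrt_nonneg _).not_gt h
  have hw : |w| ≤ 1 / 2 * |v| :=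
    (Real.abs_le_sqrt (le_add_of_nonneg_left (sq_nonneg u))).trans h.le
  have hξk : |ξ| ≤ 1.19 := by rw [abs_of_pos (by linarith)]; exact hξ₁.le
  have hy2 : 5 < y ^ 2 := sq_abs y ▸ Real.lt_sq_of_sqrt_lt hy
  exact sqrt_sq_add_sq_lt_of_cone (by norm_num) (by norm_num) hξk hw hv (by nlinarith)
end

section
/- Uniform expansion in the unstable cone: let ξ ∈ (1.18,1.19) and y ∈ ℝ with |y| > √5. Then for every pair (v,w) ∈ ℝ² with (v,w) ≠ (0,0), one has (2y·v)² + (v + ξ·w)² > v² + w². Consequently, for any vector (u,v,w) with |u| ≤ (1/2)·√(v²+w²) and (v,w) ≠ (0,0), the image (u₁,v₁,w₁) = (v, 2y·v, v + ξ·w) satisfies max{|u₁|, √(v₁² + w₁²)} > max{|u|, √(v² + w²)}. -/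
/-!
The `(v, w)`-block of the derivative, `(v, w) ↦ (2 y v, v + ξ w)`, increases the squared Euclidean
norm by the binary quadratic form `4 y² v² + 2 ξ v w + (ξ² - 1) w²`, which is positive definite as
soon as its discriminant `4 ξ² - 16 y² (ξ² - 1)` is negative; for `y² > 5` this holds whenever
`19 ξ² ≥ 20`, in particular for `ξ > 1.18`. In the cone `|u| ≤ ½ ‖(v, w)‖` the max-norm of a
vector is `‖(v, w)‖`, so the strict growth of `‖(v, w)‖` is strict growth of `|·|_*`.
-/

open Set

theorem quadratic_form_pos_of_discrim_neg {K : Type*} [CommRing K] [LinearOrder K]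
    [IsStrictOrderedRing K] {a b c : K} (ha : 0 < a) (h : discrim a b c < 0) {x y : K}
    (hxy : (x, y) ≠ 0) : 0 < a * x ^ 2 + b * x * y + c * y ^ 2 := by
  rcases eq_or_ne y 0 with rfl | hy
  · have hx : x ≠ 0 := fun hx ↦ hxy (by simp [hx])
    simpa using mul_pos ha (sq_pos_of_ne_zero hx)
  · have hsquare : 4 * a * (a * x ^ 2 + b * x * y + c * y ^ 2)
        = (2 * a * x + b * y) ^ 2 + (-discrim a b c) * y ^ 2 := by
      rw [discrim]; ring
    refine pos_of_mul_pos_right (a := 4 * a) ?_ (by positivity)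
    rw [hsquare]
    have : 0 < -discrim a b c * y ^ 2 := mul_pos (neg_pos.2 h) (sq_pos_of_ne_zero hy)
    positivity

theorem sq_add_sq_lt_of_discrim_neg {ξ y : ℝ} (h : ξ ^ 2 < 4 * y ^ 2 * (ξ ^ 2 - 1)) {v w : ℝ}
    (hvw : (v, w) ≠ 0) : v ^ 2 + w ^ 2 < (2 * y * v) ^ 2 + (v + ξ * w) ^ 2 := by
  have ha : 0 < 4 * y ^ 2 := by nlinarith [sq_nonneg ξ, sq_nonneg y]
  have hdiscrim : discrim (4 * y ^ 2) (2 * ξ) (ξ ^ 2 - 1) < 0 := by rw [discrim]; linarith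
  nlinarith [quadratic_form_pos_of_discrim_neg ha hdiscrim hvw]

theorem sq_lt_four_mul_sq_mul_sq_sub_one {ξ y : ℝ} (hξ : 20 ≤ 19 * ξ ^ 2) (hy : 5 < y ^ 2) :
    ξ ^ 2 < 4 * y ^ 2 * (ξ ^ 2 - 1) := by
  nlinarith

theorem uniform_expansion_in_unstable_cone (ξ y : ℝ)
    (hξ : ξ ∈ Ioo (1.18 : ℝ) 1.19) (hy : Real.sqrt 5 < |y|) :
    (∀ v w : ℝ, (v, w) ≠ ((0 : ℝ), (0 : ℝ)) →
      v ^ 2 + w ^ 2 < (2 * y * v) ^ 2 + (v + ξ * w) ^ 2) ∧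
    (∀ u v w : ℝ, |u| ≤ (1 / 2) * Real.sqrt (v ^ 2 + w ^ 2) →
      (v, w) ≠ ((0 : ℝ), (0 : ℝ)) →
      max |u| (Real.sqrt (v ^ 2 + w ^ 2)) <
        max |v| (Real.sqrt ((2 * y * v) ^ 2 + (v + ξ * w) ^ 2))) := by
  have hy2 : 5 < y ^ 2 := sq_abs y ▸ (Real.sqrt_lt' (hy.trans_le' (Real.sqrt_nonneg 5))).1 hy
  have hξ2 : 20 ≤ 19 * ξ ^ 2 := by nlinarith [hξ.1]
  have expand : ∀ v w : ℝ, (v, w) ≠ ((0 : ℝ), (0 : ℝ)) →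
      v ^ 2 + w ^ 2 < (2 * y * v) ^ 2 + (v + ξ * w) ^ 2 := fun _ _ ↦
    sq_add_sq_lt_of_discrim_neg (sq_lt_four_mul_sq_mul_sq_sub_one hξ2 hy2)
  refine ⟨expand, fun u v w hu hvw ↦ ?_⟩
  have hnorm := Real.sqrt_lt_sqrt (by positivity) (expand v w hvw)
  have hu' : |u| ≤ Real.sqrt (v ^ 2 + w ^ 2) := by
    linarith [Real.sqrt_nonneg (v ^ 2 + w ^ 2)]
  exact (max_lt (hu'.trans_lt hnorm) hnorm).trans_le (le_max_right _ _)
end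

section
/- Vectors on the boundary of the stable cone are mapped outside its closure: let ξ ∈ (1.18,1.19), ϑ ∈ (0, 2√5], and y ∈ ℝ with |y| > √5. If (u,v,w) ∈ ℝ³ is a nonzero vector with √(v² + w²) = ϑ·|u|, then its image (u₁,v₁,w₁) = (v, 2y·v, v + ξ·w) under the derivative of G_{ξ,μ} satisfies √(v₁² + w₁²) > ϑ·|u₁|. -/
/-!
If `v ≠ 0`, the new second coordinate alone suffices: `|2 y v| = 2|y| |v| > 2√5 |v| ≥ ϑ |v|`.
If `v = 0`, then `u₁ = 0`, and a nonzero vector on the cone boundary must have `w ≠ 0`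
(otherwise `ϑ |u| = 0` forces `u = 0`), so `w₁ = ξ w ≠ 0`.
-/

open Set

theorem ne_zero_of_sqrt_sq_add_sq_eq_mul_abs {ϑ u v w : ℝ} (hϑ : ϑ ≠ 0)
    (hne : (u, v, w) ≠ (0, 0, 0)) (h : √(v ^ 2 + w ^ 2) = ϑ * |u|) : (v, w) ≠ (0, 0) := by
  rintro ⟨⟨⟩⟩
  have hu : u = 0 := by simpa [hϑ] using h.symm
  exact hne (by simp [hu])

theorem mul_abs_lt_sqrt_mul_sq_add_sq {ϑ a v b : ℝ} (hϑ : ϑ < |a|) (hv : v ≠ 0) :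
    ϑ * |v| < √((a * v) ^ 2 + b ^ 2) :=
  calc ϑ * |v| < |a| * |v| := mul_lt_mul_of_pos_right hϑ (abs_pos.mpr hv)
    _ = |a * v| := (abs_mul a v).symm
    _ ≤ √((a * v) ^ 2 + b ^ 2) := Real.abs_le_sqrt (le_add_of_nonneg_right (sq_nonneg b))

theorem stable_cone_boundary_mapped_outside (ξ ϑ y : ℝ)
    (hξ : ξ ∈ Ioo (1.18 : ℝ) 1.19) (hϑ : ϑ ∈ Ioc (0 : ℝ) (2 * Real.sqrt 5))
    (hy : Real.sqrt 5 < |y|)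
    (u v w : ℝ) (hne : (u, v, w) ≠ ((0 : ℝ), (0 : ℝ), (0 : ℝ)))
    (h : Real.sqrt (v ^ 2 + w ^ 2) = ϑ * |u|) :
    ϑ * |v| < Real.sqrt ((2 * y * v) ^ 2 + (v + ξ * w) ^ 2) := by
  obtain ⟨hϑ0, hϑ5⟩ := hϑ
  rcases eq_or_ne v 0 with rfl | hv
  · have hw : w ≠ 0 := by simpa using ne_zero_of_sqrt_sq_add_sq_eq_mul_abs hϑ0.ne' hne h
    have hξ0 : 0 < ξ := by linarith [hξ.1]
    rw [abs_zero, mul_zero, zero_add, Real.sqrt_pos]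
    positivity
  · have h2y : ϑ < |2 * y| := by rw [abs_mul, abs_two]; linarith
    exact mul_abs_lt_sqrt_mul_sq_add_sq h2y hv
end

section
/- Markov partition property: for every (ξ,μ) ∈ 𝒫 = (1.18,1.19) × (−10,−9), the set of points of the cube Δ whose image under G_{ξ,μ} remains in Δ is exactly the union of the two Markov rectangles: {p ∈ Δ : G_{ξ,μ}(p) ∈ Δ} = 𝔸_{ξ,μ} ∪ 𝔹_{ξ,μ}. -/
open Set

noncomputable def parA (ξ μ : ℝ) : Set (ℝ × ℝ) :=
  {p | p.1 ∈ Icc (am μ) (bm μ) ∧ (-40 - p.1) / ξ ≤ p.2 ∧ p.2 ≤ (22 - p.1) / ξ}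

noncomputable def parB (ξ μ : ℝ) : Set (ℝ × ℝ) :=
  {p | p.1 ∈ Icc (cm μ) (dm μ) ∧ (-40 - p.1) / ξ ≤ p.2 ∧ p.2 ≤ (22 - p.1) / ξ}

noncomputable def markA (ξ μ : ℝ) : Set (ℝ × ℝ × ℝ) := Icc (-4) 4 ×ˢ parA ξ μ

noncomputable def markB (ξ μ : ℝ) : Set (ℝ × ℝ × ℝ) := Icc (-4) 4 ×ˢ parB ξ μ
/-! The second coordinate of `G ξ μ p` is `μ + y ^ 2`, which lies in `[-4, 4]` exactly when
`√(-4 - μ) ≤ |y| ≤ √(4 - μ)`, i.e. when `y ∈ I_μ ∪ J_μ`; the third lies in `[-40, 22]` exactly when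
`z` lies between the two slanted edges of the parallelograms. Hence `𝔸 ∪ 𝔹` is the set of points with
`x ∈ [-4, 4]` whose image lies in `Δ`. The remaining cube constraints on `y` and `z` are then
automatic: `y ^ 2 ≤ 4 - μ < 14` gives `|y| < 3.9`, and since `ξ > 1.18` the bound on `ξ z + y`
forces `z ∈ [-40, 22]`. -/

theorem abs_mem_Icc_iff {α : Type*} [AddCommGroup α] [LinearOrder α] [IsOrderedAddMonoid α]
    {s t y : α} (hs : 0 ≤ s) : |y| ∈ Icc s t ↔ y ∈ Icc (-t) (-s) ∨ y ∈ Icc s t := by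
  simp only [mem_Icc, le_abs', abs_le]
  constructor
  · rintro ⟨hy | hy, hty, hyt⟩
    · exact Or.inl ⟨hty, hy⟩
    · exact Or.inr ⟨hy, hyt⟩
  · rintro (⟨hty, hy⟩ | ⟨hy, hyt⟩)
    · exact ⟨Or.inl hy, hty, by grind⟩
    · exact ⟨Or.inr hy, by grind, hyt⟩

theorem Real.sq_mem_Icc_iff_abs_mem_Icc_sqrt {a b y : ℝ} (hb : 0 ≤ b) :
    y ^ 2 ∈ Icc a b ↔ |y| ∈ Icc (√a) (√b) := by
  rw [mem_Icc, mem_Icc, Real.sqrt_le_left (abs_nonneg y), Real.le_sqrt (abs_nonneg y) hb, sq_abs]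

theorem add_sq_mem_Icc_iff_mem_Icc_am_bm_or_cm_dm {μ y : ℝ} (hμ : μ ≤ -4) :
    μ + y ^ 2 ∈ Icc (-4) 4 ↔ y ∈ Icc (am μ) (bm μ) ∨ y ∈ Icc (cm μ) (dm μ) := by
  rw [add_mem_Icc_iff_right, Real.sq_mem_Icc_iff_abs_mem_Icc_sqrt (by linarith),
    abs_mem_Icc_iff (Real.sqrt_nonneg _), am, bm, cm, dm]

theorem div_le_and_le_div_iff_mul_add_mem_Icc {ξ a b y z : ℝ} (hξ : 0 < ξ) :
    (a - y) / ξ ≤ z ∧ z ≤ (b - y) / ξ ↔ ξ * z + y ∈ Icc a b := by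
  rw [div_le_iff₀ hξ, le_div_iff₀ hξ, add_mem_Icc_iff_left, mem_Icc, mul_comm]

theorem markA_union_markB_eq {ξ μ : ℝ} (hξ : 0 < ξ) (hμ : μ ≤ -4) :
    markA ξ μ ∪ markB ξ μ =
      {p | p.1 ∈ Icc (-4) 4 ∧ μ + p.2.1 ^ 2 ∈ Icc (-4) 4 ∧ ξ * p.2.2 + p.2.1 ∈ Icc (-40) 22} := by
  ext ⟨x, y, z⟩
  simp only [markA, markB, parA, parB, mem_union, mem_prod, mem_ofPred_eq,
    add_sq_mem_Icc_iff_mem_Icc_am_bm_or_cm_dm hμ, ← div_le_and_le_div_iff_mul_add_mem_Icc hξ]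
  tauto

theorem mem_Icc_of_mul_add_mem_Icc {ξ y z : ℝ} (hξ : 1.18 < ξ) (hy : |y| < 3.9)
    (h : ξ * z + y ∈ Icc (-40) 22) : z ∈ Icc (-40) 22 := by
  obtain ⟨h₁, h₂⟩ := h
  obtain ⟨hy₁, hy₂⟩ := abs_lt.1 hy
  constructor <;> nlinarith

theorem markov_partition_property (ξ μ : ℝ)
    (hξ : ξ ∈ Ioo (1.18 : ℝ) 1.19) (hμ : μ ∈ Ioo (-10 : ℝ) (-9)) :
    {p ∈ Cube | G ξ μ p ∈ Cube} = markA ξ μ ∪ markB ξ μ := by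
  rw [markA_union_markB_eq (by linarith [hξ.1]) (by linarith [hμ.2])]
  ext ⟨x, y, z⟩
  simp only [Cube, G, mem_prod, mem_ofPred_eq]
  constructor
  · rintro ⟨⟨hx, -, -⟩, -, hq, hz⟩
    exact ⟨hx, hq, hz⟩
  · rintro ⟨hx, hq, hz⟩
    have hy_abs : |y| < 3.9 := abs_lt_of_sq_lt_sq (by norm_num; linarith [hq.2, hμ.1]) (by norm_num)
    have hy : y ∈ Icc (-4) 4 := abs_le.1 (by linarith)
    exact ⟨⟨hx, hy, mem_Icc_of_mul_add_mem_Icc hξ.1 hy_abs hz⟩, hy, hq, hz⟩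
end
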